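/- Let 𝔡 be a finite-dimensional Lie algebra with invariant β ∈ S²𝔡, and 𝔤 ⊆ 𝔡 a β-coisotropic Lie subalgebra. In the metrized Lie algebra 𝔡̂ = 𝔡 ⋉ 𝔡*_β with bilinear form β̂((ξ₁,μ₁),(ξ₂,μ₂)) = β(μ₁,μ₂) + ⟨μ₁,ξ₂⟩ + ⟨μ₂,ξ₁⟩, the subalgebra 𝔠 = 𝔤 ⋉ 𝔡*_β is coisotropic (𝔠^⊥ ⊆ 𝔠), 𝔠^⊥ is an ideal in 𝔠, and the quotient 𝔮 = 𝔠/𝔠^⊥ is a Lie algebra carrying a non-degenerate invariant symmetric bilinear form induced from β̂, in which the image of 𝔤 is a Lagrangian Lie subalgebra. -/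

import Mathlib

/-!
Pairing with `(η, 0)` and with `(0, ν)` shows that `y ∈ 𝔠^⊥` exactly when `y.2 ∈ ann 𝔤` and
`y.1 = -β^♯ y.2`, so `𝔠^⊥` is the graph of `-β^♯` over `ann 𝔤`; β-coisotropy says
`β^♯ (ann 𝔤) ⊆ ann (ann 𝔤) = 𝔤`, whence `𝔠^⊥ ⊆ 𝔠`. Symmetry and invariance of `β` combine into
`μ ⁅η, β^♯ ν⁆ = -ν ⁅η, β^♯ μ⁆`, which makes `β̂` invariant on all of `𝔡 ⋉ 𝔡*_β` and, with the
description of `𝔠^⊥`, gives `⁅𝔠, 𝔠^⊥⁆ ⊆ 𝔠^⊥`; the statements about the quotient then follow by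
bilinearity. Since `β̂ (x, (ξ, 0)) = x.2 ξ`, the element `x ∈ 𝔠` is orthogonal to `𝔤` iff
`x.2 ∈ ann 𝔤`, and then `x ≡ (x.1 + β^♯ x.2, 0)` modulo `𝔠^⊥`.
-/

open Module LieAlgebra

/-- `x` lies in the β̂-orthogonal `𝔠^⊥` of the coisotropic subalgebra
`𝔠 = 𝔤 ⋉ 𝔡*_β = {y | y.1 ∈ G}` of `𝔡 ⋉ 𝔡*_β`. -/
def InCperp {K D : Type*} [Field K] [AddCommGroup D] [Module K D]
    (G : Submodule K D)
    (hatβ : (D × Module.Dual K D) → (D × Module.Dual K D) → K)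
    (x : D × Module.Dual K D) : Prop :=
  ∀ y : D × Module.Dual K D, y.1 ∈ G → hatβ x y = 0

theorem sharp_mem_of_mem_dualAnnihilator {K V : Type*} [Field K] [AddCommGroup V] [Module K V]
    {Bs : Dual K V →ₗ[K] V} {G : Submodule K V}
    (hco : ∀ μ ν : Dual K V, μ ∈ G.dualAnnihilator → ν ∈ G.dualAnnihilator → μ (Bs ν) = 0)
    {μ : Dual K V} (hμ : μ ∈ G.dualAnnihilator) : Bs μ ∈ G := by
  rw [← Subspace.forall_mem_dualAnnihilator_apply_eq_zero_iff]
  exact fun φ hφ => hco φ μ hφ hμ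

-- `Bs` is `β^♯ : 𝔡* → 𝔡`; `form` is `β̂` and `bracket` is the bracket of `𝔡 ⋉ 𝔡*_β`.
namespace SemidirectDual

variable {K D : Type*} [Field K] [LieRing D] [LieAlgebra K D] (Bs : Dual K D →ₗ[K] D)

def IsSymmetric : Prop := ∀ μ ν : Dual K D, μ (Bs ν) = ν (Bs μ)

def IsAdInvariant : Prop := ∀ (ξ : D) (μ : Dual K D), Bs (μ ∘ₗ ad K D ξ) = -⁅ξ, Bs μ⁆

def dualBracket (μ ν : Dual K D) : Dual K D := -(ν ∘ₗ ad K D (Bs μ))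

def bracket (x y : D × Dual K D) : D × Dual K D :=
  (⁅x.1, y.1⁆, -(y.2 ∘ₗ ad K D x.1) + (x.2 ∘ₗ ad K D y.1) + dualBracket Bs x.2 y.2)

def form (x y : D × Dual K D) : K := x.2 (Bs y.2) + x.2 y.1 + y.2 x.1

variable {Bs}

@[simp]
theorem dualBracket_apply (μ ν : Dual K D) (ξ : D) : dualBracket Bs μ ν ξ = ν ⁅ξ, Bs μ⁆ := by
  rw [dualBracket, LinearMap.neg_apply, LinearMap.comp_apply, ad_apply, ← map_neg, lie_skew]

theorem apply_lie_sharp (hsymm : IsSymmetric Bs) (hinv : IsAdInvariant Bs)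
    (μ ν : Dual K D) (η : D) : μ ⁅η, Bs ν⁆ = -ν ⁅η, Bs μ⁆ := by
  have h := hsymm μ (ν ∘ₗ ad K D η)
  rw [hinv, map_neg, LinearMap.comp_apply, ad_apply] at h
  rw [← h, neg_neg]

theorem dualBracket_swap (hsymm : IsSymmetric Bs) (hinv : IsAdInvariant Bs) (μ ν : Dual K D) :
    dualBracket Bs ν μ = -dualBracket Bs μ ν := by
  ext ξ
  simp only [dualBracket_apply, LinearMap.neg_apply, apply_lie_sharp hsymm hinv μ ν]

theorem sharp_dualBracket (hinv : IsAdInvariant Bs) (μ ν : Dual K D) :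
    Bs (dualBracket Bs μ ν) = ⁅Bs μ, Bs ν⁆ := by
  rw [dualBracket, map_neg, hinv, neg_neg]

theorem form_comm (hsymm : IsSymmetric Bs) (x y : D × Dual K D) : form Bs x y = form Bs y x := by
  rw [form, form, hsymm]
  ring

theorem form_sub_left (x x' y : D × Dual K D) :
    form Bs (x - x') y = form Bs x y - form Bs x' y := by
  simp only [form, Prod.fst_sub, Prod.snd_sub, LinearMap.sub_apply, map_sub]
  ring

theorem form_neg_left (x y : D × Dual K D) : form Bs (-x) y = -form Bs x y := by
  simp only [form, Prod.fst_neg, Prod.snd_neg, LinearMap.neg_apply, map_neg]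
  ring

@[simp]
theorem form_inl (x : D × Dual K D) (ξ : D) : form Bs x (ξ, 0) = x.2 ξ := by
  simp [form]

theorem bracket_swap (hsymm : IsSymmetric Bs) (hinv : IsAdInvariant Bs) (x y : D × Dual K D) :
    bracket Bs y x = -bracket Bs x y := by
  rw [bracket, bracket, dualBracket_swap hsymm hinv, ← lie_skew x.1]
  ext1
  · exact (neg_neg _).symm
  · simp only [Prod.snd_neg]
    abel

theorem bracket_sub_left (x x' y : D × Dual K D) :
    bracket Bs (x - x') y = bracket Bs x y - bracket Bs x' y := by
  ext ξ
  · exact sub_lie _ _ _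
  · simp only [bracket, Prod.fst_sub, Prod.snd_sub, LinearMap.add_apply, LinearMap.sub_apply,
      LinearMap.neg_apply, LinearMap.comp_apply, ad_apply, dualBracket_apply, sub_lie, lie_sub,
      map_sub]
    ring

theorem bracket_sub_right (hsymm : IsSymmetric Bs) (hinv : IsAdInvariant Bs)
    (x y y' : D × Dual K D) : bracket Bs x (y - y') = bracket Bs x y - bracket Bs x y' := by
  rw [bracket_swap hsymm hinv, bracket_sub_left, bracket_swap hsymm hinv y,
    bracket_swap hsymm hinv y', neg_sub, sub_neg_eq_add, neg_add_eq_sub]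

theorem form_bracket_add_form_bracket (hsymm : IsSymmetric Bs) (hinv : IsAdInvariant Bs)
    (x y z : D × Dual K D) : form Bs (bracket Bs x y) z + form Bs y (bracket Bs x z) = 0 := by
  simp only [form, bracket, LinearMap.add_apply, LinearMap.neg_apply, LinearMap.comp_apply,
    ad_apply, dualBracket_apply, map_add, map_neg, hinv _ _, sharp_dualBracket hinv]
  rw [apply_lie_sharp hsymm hinv x.2 z.2, ← lie_skew (Bs z.2), ← lie_skew y.1 z.1, map_neg, map_neg]
  ring

end SemidirectDual

open SemidirectDual

section

variable {K D : Type*} [Field K] [LieRing D] [LieAlgebra K D] {Bs : Dual K D →ₗ[K] D}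
  {G : Submodule K D}

theorem inCperp_form_iff (hsymm : IsSymmetric Bs) (x : D × Dual K D) :
    InCperp G (form Bs) x ↔ x.2 ∈ G.dualAnnihilator ∧ x.1 = -Bs x.2 := by
  constructor
  · intro h
    refine ⟨(Submodule.mem_dualAnnihilator _).2 fun η hη => by simpa using h (η, 0) hη, ?_⟩
    rw [eq_neg_iff_add_eq_zero, ← Module.forall_dual_apply_eq_zero_iff K]
    intro ν
    simpa [form, hsymm x.2 ν, add_comm] using h (0, ν) G.zero_mem
  · rintro ⟨hann, hfst⟩ y hy
    rw [form, hfst, hsymm, (Submodule.mem_dualAnnihilator _).1 hann y.1 hy, map_neg]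
    ring

namespace InCperp

theorem neg {x : D × Dual K D} (hx : InCperp G (form Bs) x) : InCperp G (form Bs) (-x) :=
  fun y hy => by rw [form_neg_left, hx y hy, neg_zero]

theorem fst_mem (hsymm : IsSymmetric Bs)
    (hco : ∀ μ ν : Dual K D, μ ∈ G.dualAnnihilator → ν ∈ G.dualAnnihilator → μ (Bs ν) = 0)
    {x : D × Dual K D} (hx : InCperp G (form Bs) x) : x.1 ∈ G := by
  obtain ⟨hann, hfst⟩ := (inCperp_form_iff hsymm x).1 hx
  rw [hfst]
  exact G.neg_mem (sharp_mem_of_mem_dualAnnihilator hco hann)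

theorem bracket_left (hsymm : IsSymmetric Bs) (hinv : IsAdInvariant Bs)
    (hG : ∀ x ∈ G, ∀ y ∈ G, ⁅x, y⁆ ∈ G) {x y : D × Dual K D} (hx : x.1 ∈ G)
    (hy : InCperp G (form Bs) y) : InCperp G (form Bs) (bracket Bs x y) := by
  obtain ⟨hann, hfst⟩ := (inCperp_form_iff hsymm y).1 hy
  rw [Submodule.mem_dualAnnihilator] at hann
  rw [inCperp_form_iff hsymm, Submodule.mem_dualAnnihilator]
  constructor
  · intro η hη
    simp only [bracket, LinearMap.add_apply, LinearMap.neg_apply, LinearMap.comp_apply, ad_apply,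
      dualBracket_apply, hann _ (hG _ hx _ hη), hfst, map_neg,
      apply_lie_sharp hsymm hinv y.2 x.2, ← lie_skew (Bs y.2) η]
    ring
  · simp only [bracket, map_add, map_neg, LinearMap.comp_neg, hinv _ _, sharp_dualBracket hinv,
      hfst, lie_neg, neg_neg]
    rw [← lie_skew (Bs x.2)]
    abel

theorem bracket_right (hsymm : IsSymmetric Bs) (hinv : IsAdInvariant Bs)
    (hG : ∀ x ∈ G, ∀ y ∈ G, ⁅x, y⁆ ∈ G) {x y : D × Dual K D} (hx : x.1 ∈ G)
    (hy : InCperp G (form Bs) y) : InCperp G (form Bs) (bracket Bs y x) := by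
  rw [bracket_swap hsymm hinv]
  exact (hy.bracket_left hsymm hinv hG hx).neg

end InCperp

theorem exists_inCperp_sub_inl_iff (hsymm : IsSymmetric Bs)
    (hco : ∀ μ ν : Dual K D, μ ∈ G.dualAnnihilator → ν ∈ G.dualAnnihilator → μ (Bs ν) = 0)
    {x : D × Dual K D} (hx : x.1 ∈ G) :
    (∃ ξ ∈ G, InCperp G (form Bs) (x - (ξ, 0))) ↔ x.2 ∈ G.dualAnnihilator := by
  simp only [inCperp_form_iff hsymm, Prod.fst_sub, Prod.snd_sub, sub_zero, sub_eq_iff_eq_add]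
  constructor
  · rintro ⟨ξ, -, hann, -⟩
    exact hann
  · intro hann
    refine ⟨x.1 + Bs x.2, G.add_mem hx (sharp_mem_of_mem_dualAnnihilator hco hann), hann, ?_⟩
    abel

end

theorem coisotropic_reduction_general {K D : Type*} [Field K]
    [LieRing D] [LieAlgebra K D]
    (Bs : Module.Dual K D →ₗ[K] D)
    (hsymm : ∀ μ ν : Module.Dual K D, μ (Bs ν) = ν (Bs μ))
    (hinv : ∀ (ξ : D) (μ : Module.Dual K D),
      Bs (μ ∘ₗ LieAlgebra.ad K D ξ) = -⁅ξ, Bs μ⁆)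
    (br : Module.Dual K D → Module.Dual K D → Module.Dual K D)
    (hbr : ∀ (μ₁ μ₂ : Module.Dual K D) (ξ : D), br μ₁ μ₂ ξ = μ₂ ⁅ξ, Bs μ₁⁆)
    (Br : (D × Module.Dual K D) → (D × Module.Dual K D) → (D × Module.Dual K D))
    (hBr : ∀ x y : D × Module.Dual K D,
      Br x y = (⁅x.1, y.1⁆,
        -(y.2 ∘ₗ LieAlgebra.ad K D x.1) + (x.2 ∘ₗ LieAlgebra.ad K D y.1)
          + br x.2 y.2))
    (hatβ : (D × Module.Dual K D) → (D × Module.Dual K D) → K)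
    (hβ : ∀ x y : D × Module.Dual K D,
      hatβ x y = x.2 (Bs y.2) + x.2 y.1 + y.2 x.1)
    (G : Submodule K D)
    (hG : ∀ x ∈ G, ∀ y ∈ G, ⁅x, y⁆ ∈ G)
    (hco : ∀ μ ν : Module.Dual K D,
      μ ∈ G.dualAnnihilator → ν ∈ G.dualAnnihilator → μ (Bs ν) = 0) :
    -- 𝔠 is coisotropic: 𝔠^⊥ ⊆ 𝔠
    (∀ x : D × Module.Dual K D, InCperp G hatβ x → x.1 ∈ G) ∧
    -- 𝔠 is a Lie subalgebra
    (∀ x y : D × Module.Dual K D, x.1 ∈ G → y.1 ∈ G → (Br x y).1 ∈ G) ∧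
    -- 𝔠^⊥ is an ideal in 𝔠
    (∀ x y : D × Module.Dual K D, x.1 ∈ G → InCperp G hatβ y →
      InCperp G hatβ (Br x y) ∧ InCperp G hatβ (Br y x)) ∧
    -- the bracket descends to the quotient 𝔮 = 𝔠/𝔠^⊥
    (∀ x x' y : D × Module.Dual K D, x.1 ∈ G → x'.1 ∈ G → y.1 ∈ G →
      InCperp G hatβ (x - x') →
      InCperp G hatβ (Br x y - Br x' y) ∧ InCperp G hatβ (Br y x - Br y x')) ∧
    -- the bilinear form descends to the quotient
    (∀ x y y' : D × Module.Dual K D, x.1 ∈ G → y.1 ∈ G → y'.1 ∈ G →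
      InCperp G hatβ (y - y') → hatβ x y = hatβ x y') ∧
    -- the induced form is symmetric and invariant on 𝔠
    (∀ x y : D × Module.Dual K D, x.1 ∈ G → y.1 ∈ G → hatβ x y = hatβ y x) ∧
    (∀ x y z : D × Module.Dual K D, x.1 ∈ G → y.1 ∈ G → z.1 ∈ G →
      hatβ (Br x y) z + hatβ y (Br x z) = 0) ∧
    -- the image of 𝔤 in the quotient is Lagrangian
    (∀ x : D × Module.Dual K D, x.1 ∈ G →
      ((∀ ξ ∈ G, hatβ x (ξ, (0 : Module.Dual K D)) = 0) ↔
        ∃ ξ ∈ G, InCperp G hatβ (x - (ξ, (0 : Module.Dual K D))))) := by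
  obtain rfl : br = dualBracket Bs :=
    funext₂ fun μ ν => LinearMap.ext fun ξ => by rw [hbr, dualBracket_apply]
  obtain rfl : Br = bracket Bs := funext₂ hBr
  obtain rfl : hatβ = form Bs := funext₂ hβ
  refine ⟨fun x hx => hx.fst_mem hsymm hco, fun x y hx hy => hG _ hx _ hy,
    fun x y hx hy => ⟨hy.bracket_left hsymm hinv hG hx, hy.bracket_right hsymm hinv hG hx⟩,
    fun x x' y _ _ hy hxx' => ⟨?_, ?_⟩, fun x y y' hx _ _ hyy' => ?_,
    fun x y _ _ => form_comm hsymm x y,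
    fun x y z _ _ _ => form_bracket_add_form_bracket hsymm hinv x y z, fun x hx => ?_⟩
  · rw [← bracket_sub_left]
    exact hxx'.bracket_right hsymm hinv hG hy
  · rw [← bracket_sub_right hsymm hinv]
    exact hxx'.bracket_left hsymm hinv hG hy
  · rw [form_comm hsymm x, form_comm hsymm x, ← sub_eq_zero, ← form_sub_left]
    exact hyy' x hx
  · simp only [form_inl]
    rw [exists_inCperp_sub_inl_iff hsymm hco hx, Submodule.mem_dualAnnihilator]

/-- Coisotropic reduction of `𝔡 ⋉ 𝔡*_β` by `𝔠 = 𝔤 ⋉ 𝔡*_β`, for a β-coisotropic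
Lie subalgebra `𝔤 ⊆ 𝔡`: the subalgebra `𝔠` is coisotropic (`𝔠^⊥ ⊆ 𝔠`), `𝔠^⊥` is
an ideal in `𝔠`, and the quotient `𝔮 = 𝔠/𝔠^⊥` is a Lie algebra with a
non-degenerate invariant symmetric bilinear form induced from `β̂`, in which the
image of `𝔤` is a Lagrangian Lie subalgebra.  All assertions about the quotient
are expressed at the level of representatives in `𝔠`. -/
theorem coisotropic_reduction {K D : Type*} [Field K]
    [LieRing D] [LieAlgebra K D] [FiniteDimensional K D]
    (Bs : Module.Dual K D →ₗ[K] D)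
    (hsymm : ∀ μ ν : Module.Dual K D, μ (Bs ν) = ν (Bs μ))
    (hinv : ∀ (ξ : D) (μ : Module.Dual K D),
      Bs (μ ∘ₗ LieAlgebra.ad K D ξ) = -⁅ξ, Bs μ⁆)
    (br : Module.Dual K D → Module.Dual K D → Module.Dual K D)
    (hbr : ∀ (μ₁ μ₂ : Module.Dual K D) (ξ : D), br μ₁ μ₂ ξ = μ₂ ⁅ξ, Bs μ₁⁆)
    (Br : (D × Module.Dual K D) → (D × Module.Dual K D) → (D × Module.Dual K D))
    (hBr : ∀ x y : D × Module.Dual K D,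
      Br x y = (⁅x.1, y.1⁆,
        -(y.2 ∘ₗ LieAlgebra.ad K D x.1) + (x.2 ∘ₗ LieAlgebra.ad K D y.1)
          + br x.2 y.2))
    (hatβ : (D × Module.Dual K D) → (D × Module.Dual K D) → K)
    (hβ : ∀ x y : D × Module.Dual K D,
      hatβ x y = x.2 (Bs y.2) + x.2 y.1 + y.2 x.1)
    (G : Submodule K D)
    (hG : ∀ x ∈ G, ∀ y ∈ G, ⁅x, y⁆ ∈ G)
    (hco : ∀ μ ν : Module.Dual K D,
      μ ∈ G.dualAnnihilator → ν ∈ G.dualAnnihilator → μ (Bs ν) = 0) :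
    -- 𝔠 is coisotropic: 𝔠^⊥ ⊆ 𝔠
    (∀ x : D × Module.Dual K D, InCperp G hatβ x → x.1 ∈ G) ∧
    -- 𝔠 is a Lie subalgebra
    (∀ x y : D × Module.Dual K D, x.1 ∈ G → y.1 ∈ G → (Br x y).1 ∈ G) ∧
    -- 𝔠^⊥ is an ideal in 𝔠
    (∀ x y : D × Module.Dual K D, x.1 ∈ G → InCperp G hatβ y →
      InCperp G hatβ (Br x y) ∧ InCperp G hatβ (Br y x)) ∧
    -- the bracket descends to the quotient 𝔮 = 𝔠/𝔠^⊥
    (∀ x x' y : D × Module.Dual K D, x.1 ∈ G → x'.1 ∈ G → y.1 ∈ G →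
      InCperp G hatβ (x - x') →
      InCperp G hatβ (Br x y - Br x' y) ∧ InCperp G hatβ (Br y x - Br y x')) ∧
    -- the bilinear form descends to the quotient
    (∀ x y y' : D × Module.Dual K D, x.1 ∈ G → y.1 ∈ G → y'.1 ∈ G →
      InCperp G hatβ (y - y') → hatβ x y = hatβ x y') ∧
    -- the induced form is symmetric and invariant on 𝔠
    (∀ x y : D × Module.Dual K D, x.1 ∈ G → y.1 ∈ G → hatβ x y = hatβ y x) ∧
    (∀ x y z : D × Module.Dual K D, x.1 ∈ G → y.1 ∈ G → z.1 ∈ G →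
      hatβ (Br x y) z + hatβ y (Br x z) = 0) ∧
    -- the image of 𝔤 in the quotient is Lagrangian
    (∀ x : D × Module.Dual K D, x.1 ∈ G →
      ((∀ ξ ∈ G, hatβ x (ξ, (0 : Module.Dual K D)) = 0) ↔
        ∃ ξ ∈ G, InCperp G hatβ (x - (ξ, (0 : Module.Dual K D))))) :=
  coisotropic_reduction_general Bs hsymm hinv br hbr Br hBr hatβ hβ G hG hco
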